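/- Let χ be a Dirichlet character modulo m with gcd(m, N) = 1. For every s ∈ ℂ with Re(s) > 2, Σ_{n≥1} χ(n)·A(n)·n^{−s} = χ(D)·D^{1−s}·(∏_{l ∣ T₁}(1 − χ(l)φ(l)·l^{−s}))·(∏_{q ∣ T₂}(1 − χ(q)φ⁻¹(q)·q^{1−s}))·(Σ_{n≥1} χ(n)φ(n)·n^{−s})·(Σ_{n≥1} χ(n)φ⁻¹(n)·n^{1−s}). That is, L(E_{φ,M,L}, χ, s) = χ(ML/(T₁T₂))·(ML/(T₁T₂))^{1−s}·∏_{l∣T₁}(1 − χφ(l)l^{−s})·∏_{q∣T₂}(1 − χφ⁻¹(q)q^{1−s})·L(χφ, s)·L(χφ⁻¹, s−1). -/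

import Mathlib

/-! Twisting by `χ` commutes with every operation that builds `A` out of `b`. The coefficients
`b` are the Dirichlet convolution of `φ` with `n ↦ φ⁻¹(n) n`, hence
`L(χb, s) = L(χφ, s) L(χφ⁻¹, s - 1)`. Replacing `g(n)` by `g(n/e)` (zero unless `e ∣ n`)
multiplies a twisted L-series by `χ(e) e^{-s}`; for `e = D` this produces `χ(D) D^{1-s}`. The
remaining finite Möbius sum over the squarefree `e ∣ T₁T₂` is a product over primes, which
yields the Euler factors at `l ∣ T₁` and `q ∣ T₂`. -/

open scoped BigOperators

/-- The `n`-th Fourier coefficient of the weight-2 Eisenstein series `E_φ = E_{φ,φ⁻¹}`: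
`b(n) = Σ_{d ∣ n} φ(n/d) · φ⁻¹(d) · d`. -/
noncomputable def eisCoeff (f : ℕ) (φ : DirichletCharacter ℂ f) (n : ℕ) : ℂ :=
  ∑ d ∈ n.divisors, φ ((n / d : ℕ) : ZMod f) * φ⁻¹ ((d : ℕ) : ZMod f) * (d : ℂ)

/-- The `n`-th Fourier coefficient of the refined Eisenstein series `E_{φ,T₁,T₂}`. -/
noncomputable def refCoeff (f : ℕ) (φ : DirichletCharacter ℂ f) (T₁ T₂ : ℕ) (n : ℕ) : ℂ :=
  ∑ e ∈ (T₁ * T₂).divisors,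
    ((ArithmeticFunction.moebius e : ℤ) : ℂ) *
      (∏ l ∈ (Nat.gcd e T₁).primeFactors, φ ((l : ℕ) : ZMod f)) *
      (∏ q ∈ (Nat.gcd e T₂).primeFactors, (q : ℂ) * φ⁻¹ ((q : ℕ) : ZMod f)) *
      (if e ∣ n then eisCoeff f φ (n / e) else 0)

/-- The `n`-th Fourier coefficient of `E_{φ,M,L}(z) = D·E_{φ,T₁,T₂}(Dz)`, where
`D = ML/(T₁T₂)`: `A(n) = D·a(n/D)` if `D ∣ n` and `0` otherwise. -/
noncomputable def fullCoeff (f : ℕ) (φ : DirichletCharacter ℂ f) (T₁ T₂ D : ℕ) (n : ℕ) : ℂ :=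
  if D ∣ n then (D : ℂ) * refCoeff f φ T₁ T₂ (n / D) else 0

section Cpow

open Complex

lemma mul_cpow_neg_eq_cpow_one_sub (x : ℂ) {s : ℂ} (hs : s ≠ 1) : x * x ^ (-s) = x ^ (1 - s) := by
  rcases eq_or_ne x 0 with rfl | hx
  · rw [zero_mul, zero_cpow (sub_ne_zero.mpr hs.symm)]
  rw [sub_eq_add_neg, cpow_add _ _ hx, cpow_one]

lemma prod_natCast_cpow (t : Finset ℕ) (s : ℂ) :
    ∏ p ∈ t, (p : ℂ) ^ s = ((∏ p ∈ t, p : ℕ) : ℂ) ^ s := by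
  classical
  induction t using Finset.induction_on with
  | empty => simp
  | insert p t hp ih =>
    rw [Finset.prod_insert hp, Finset.prod_insert hp, ih, Nat.cast_mul, natCast_mul_natCast_cpow]

lemma prod_primeFactors_twist_cpow {m : ℕ} (χ : DirichletCharacter ℂ m) {e : ℕ}
    (he : Squarefree e) (s : ℂ) :
    ∏ p ∈ e.primeFactors, χ p * (p : ℂ) ^ s = χ e * (e : ℂ) ^ s := by
  conv_rhs => rw [← Nat.prod_primeFactors_of_squarefree he]
  rw [Finset.prod_mul_distrib, prod_natCast_cpow]
  congr 1
  rw [Nat.cast_prod, map_prod]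

end Cpow

section LSeries

open LSeries Complex

lemma LSeries_eq_tsum_succ (f : ℕ → ℂ) (s : ℂ) :
    LSeries f s = ∑' n : ℕ, f (n + 1) * ((n + 1 : ℕ) : ℂ) ^ (-s) := by
  rw [LSeries, ← Nat.succ_injective.tsum_eq]
  · simp [term_of_ne_zero, div_eq_mul_inv, cpow_neg]
  · rintro (_ | k) hn
    · exact absurd (term_zero f s) hn
    · exact ⟨k, rfl⟩

lemma term_mul_natCast (f : ℕ → ℂ) (s : ℂ) (n : ℕ) :
    term (fun n => f n * n) s n = term f (s - 1) n := by
  rcases eq_or_ne n 0 with rfl | hn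
  · simp
  rw [term_of_ne_zero hn, term_of_ne_zero hn, cpow_sub _ _ (Nat.cast_ne_zero.mpr hn), cpow_one,
    div_div_eq_mul_div]

lemma LSeries_mul_natCast (g : ℕ → ℂ) (s : ℂ) :
    LSeries (fun n => g n * n) s = LSeries g (s - 1) :=
  tsum_congr (term_mul_natCast g s)

lemma LSeriesSummable_mul_natCast_iff {g : ℕ → ℂ} {s : ℂ} :
    LSeriesSummable (fun n => g n * n) s ↔ LSeriesSummable g (s - 1) := by
  rw [LSeriesSummable, funext (term_mul_natCast g s), LSeriesSummable]

end LSeries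

section Dilate

open LSeries Complex
open scoped LSeries.notation

noncomputable def dilate (c : ℕ) (g : ℕ → ℂ) (n : ℕ) : ℂ :=
  if c ∣ n then g (n / c) else 0

variable {c : ℕ} {g : ℕ → ℂ} {s : ℂ}

lemma term_dilate_mul (hc : c ≠ 0) (g : ℕ → ℂ) (s : ℂ) (k : ℕ) :
    term (dilate c g) s (c * k) = (c : ℂ) ^ (-s) * term g s k := by
  rcases eq_or_ne k 0 with rfl | hk
  · simp
  rw [term_of_ne_zero (mul_ne_zero hc hk), term_of_ne_zero hk, dilate,
    if_pos (dvd_mul_right c k), Nat.mul_div_cancel_left k (Nat.pos_of_ne_zero hc), Nat.cast_mul,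
    natCast_mul_natCast_cpow, cpow_neg]
  field_simp

lemma support_term_dilate_subset (g : ℕ → ℂ) (s : ℂ) :
    Function.support (term (dilate c g) s) ⊆ Set.range (c * ·) := by
  intro n hn
  obtain ⟨k, rfl⟩ : c ∣ n := by_contra fun h => hn (by simp [term_def, dilate, h])
  exact ⟨k, rfl⟩

lemma LSeries_dilate (hc : c ≠ 0) (g : ℕ → ℂ) (s : ℂ) :
    LSeries (dilate c g) s = (c : ℂ) ^ (-s) * LSeries g s := by
  rw [LSeries, ← (mul_right_injective₀ hc).tsum_eq (support_term_dilate_subset g s)]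
  simp only [term_dilate_mul hc, tsum_mul_left, LSeries]

lemma LSeriesSummable.dilate (hc : c ≠ 0) (hg : LSeriesSummable g s) :
    LSeriesSummable (dilate c g) s := by
  refine ((mul_right_injective₀ hc).summable_iff fun n hn =>
    Function.notMem_support.mp fun h => hn (support_term_dilate_subset g s h)).mp ?_
  simpa only [Function.comp_def, term_dilate_mul hc] using hg.mul_left ((c : ℂ) ^ (-s))

lemma LSeries_natCast_smul_dilate (c : ℕ) (g : ℕ → ℂ) (s : ℂ) :
    LSeries ((c : ℂ) • dilate c g) s = c * (c : ℂ) ^ (-s) * LSeries g s := by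
  rcases eq_or_ne c 0 with rfl | hc
  · simp
  rw [LSeries_smul, LSeries_dilate hc, mul_assoc]

lemma mul_dilate {m : ℕ} (χ : DirichletCharacter ℂ m) (c : ℕ) (g : ℕ → ℂ) :
    ↗χ * dilate c g = χ c • dilate c (↗χ * g) := by
  ext n
  by_cases h : c ∣ n
  · simp only [Pi.mul_apply, Pi.smul_apply, dilate, if_pos h, smul_eq_mul]
    have hn : (n : ZMod m) = c * (n / c : ℕ) := by rw [← Nat.cast_mul, Nat.mul_div_cancel' h]
    rw [hn, map_mul, mul_assoc]
  · simp [dilate, h]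

lemma mul_sum_smul_dilate {m : ℕ} (χ : DirichletCharacter ℂ m) (S : Finset ℕ) (w : ℕ → ℂ)
    (g : ℕ → ℂ) :
    ↗χ * ∑ e ∈ S, w e • dilate e g = ∑ e ∈ S, (w e * χ e) • dilate e (↗χ * g) := by
  simp only [Finset.mul_sum, mul_smul_comm, mul_dilate, smul_smul, mul_comm (w _)]

lemma LSeries_sum_smul_dilate {S : Finset ℕ} (hS : 0 ∉ S) (w : ℕ → ℂ)
    (hg : LSeriesSummable g s) :
    LSeries (∑ e ∈ S, w e • dilate e g) s = (∑ e ∈ S, w e * (e : ℂ) ^ (-s)) * LSeries g s := by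
  have hS' : ∀ e ∈ S, e ≠ 0 := fun e he h => hS (h ▸ he)
  rw [LSeries_sum fun e he => (hg.dilate (hS' e he)).smul (w e), Finset.sum_mul]
  refine Finset.sum_congr rfl fun e he => ?_
  rw [LSeries_smul, LSeries_dilate (hS' e he), mul_assoc]

end Dilate

section SquarefreeSums

open ArithmeticFunction
open scoped ArithmeticFunction.Moebius

lemma squarefree_prod_of_prime {s : Finset ℕ} (hs : ∀ p ∈ s, p.Prime) :
    Squarefree (∏ p ∈ s, p) :=
  Finset.squarefree_prod_of_pairwise_isCoprime
    (fun p hp q hq hpq => Nat.coprime_iff_isRelPrime.mp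
      ((Nat.coprime_primes (hs p hp) (hs q hq)).mpr hpq))
    fun p hp => (hs p hp).squarefree

lemma prod_primeFactors_eq_prod_primeFactors_gcd_mul {β : Type*} [CommMonoid β] {a b e : ℕ}
    (hab : a.Coprime b) (he : e ∣ a * b) (F : ℕ → β) :
    ∏ p ∈ e.primeFactors, F p =
      (∏ p ∈ (e.gcd a).primeFactors, F p) * ∏ p ∈ (e.gcd b).primeFactors, F p := by
  have hsplit : e = e.gcd a * e.gcd b := by
    rw [← Nat.Coprime.gcd_mul e hab, Nat.gcd_eq_left he]
  have hcop : (e.gcd a).Coprime (e.gcd b) :=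
    hab.coprime_dvd_left (Nat.gcd_dvd_right e a) |>.coprime_dvd_right (Nat.gcd_dvd_right e b)
  conv_lhs => rw [hsplit]
  rw [hcop.primeFactors_mul, Finset.prod_union hcop.disjoint_primeFactors]

lemma sum_divisors_moebius_mul_prod_primeFactors {R : Type*} [CommRing R] {n : ℕ}
    (hn : Squarefree n) (w : ℕ → R) :
    ∑ d ∈ n.divisors, (μ d : R) * ∏ p ∈ d.primeFactors, w p = ∏ p ∈ n.primeFactors, (1 - w p) := by
  calc ∑ d ∈ n.divisors, (μ d : R) * ∏ p ∈ d.primeFactors, w p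
      = ∑ d ∈ n.divisors, (μ d : R) * prodPrimeFactors w d :=
        Finset.sum_congr rfl fun d hd => by
          rw [prodPrimeFactors_apply (Nat.pos_of_mem_divisors hd).ne']
    _ = ∏ p ∈ n.primeFactors, (1 - prodPrimeFactors w p) :=
        ((IsMultiplicative.prodPrimeFactors w).prodPrimeFactors_one_sub_of_squarefree _ hn).symm
    _ = ∏ p ∈ n.primeFactors, (1 - w p) :=
        Finset.prod_congr rfl fun p hp => by
          have hp : p.Prime := Nat.prime_of_mem_primeFactors hp
          rw [prodPrimeFactors_apply hp.ne_zero, hp.primeFactors, Finset.prod_singleton]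

lemma sum_divisors_mul_moebius_mul_prod_primeFactors_gcd {R : Type*} [CommRing R] {a b : ℕ}
    (ha : Squarefree a) (hb : Squarefree b) (hab : a.Coprime b) (u v : ℕ → R) :
    ∑ e ∈ (a * b).divisors, (μ e : R) * (∏ p ∈ (e.gcd a).primeFactors, u p) *
        ∏ p ∈ (e.gcd b).primeFactors, v p =
      (∏ p ∈ a.primeFactors, (1 - u p)) * ∏ p ∈ b.primeFactors, (1 - v p) := by
  classical
  set w : ℕ → R := fun p => if p ∣ a then u p else v p
  have hwu : ∀ e : ℕ, ∀ p ∈ (e.gcd a).primeFactors, w p = u p := fun e p hp =>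
    if_pos ((Nat.dvd_of_mem_primeFactors hp).trans (Nat.gcd_dvd_right e a))
  have hwv : ∀ e : ℕ, ∀ p ∈ (e.gcd b).primeFactors, w p = v p := fun e p hp =>
    if_neg fun hpa => (Nat.prime_of_mem_primeFactors hp).ne_one <| Nat.eq_one_of_dvd_coprimes hab
      hpa ((Nat.dvd_of_mem_primeFactors hp).trans (Nat.gcd_dvd_right e b))
  calc ∑ e ∈ (a * b).divisors, (μ e : R) * (∏ p ∈ (e.gcd a).primeFactors, u p) *
          ∏ p ∈ (e.gcd b).primeFactors, v p
      = ∑ e ∈ (a * b).divisors, (μ e : R) * ∏ p ∈ e.primeFactors, w p :=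
        Finset.sum_congr rfl fun e he => by
          rw [prod_primeFactors_eq_prod_primeFactors_gcd_mul hab (Nat.dvd_of_mem_divisors he),
            Finset.prod_congr rfl (hwu e), Finset.prod_congr rfl (hwv e), mul_assoc]
    _ = ∏ p ∈ (a * b).primeFactors, (1 - w p) :=
        sum_divisors_moebius_mul_prod_primeFactors ((Nat.squarefree_mul hab).mpr ⟨ha, hb⟩) w
    _ = (∏ p ∈ a.primeFactors, (1 - u p)) * ∏ p ∈ b.primeFactors, (1 - v p) := by
        rw [prod_primeFactors_eq_prod_primeFactors_gcd_mul hab dvd_rfl,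
          Finset.prod_congr rfl fun p hp => congrArg (1 - ·) (hwu _ p hp),
          Finset.prod_congr rfl fun p hp => congrArg (1 - ·) (hwv _ p hp),
          Nat.gcd_eq_right (dvd_mul_right a b), Nat.gcd_eq_right (dvd_mul_left b a)]

end SquarefreeSums

section EisensteinLSeries

open LSeries Complex
open scoped LSeries.notation

variable {f m : ℕ} (φ : DirichletCharacter ℂ f) (χ : DirichletCharacter ℂ m) {s : ℂ}

lemma eisCoeff_eq_convolution : eisCoeff f φ = ↗φ ⍟ fun n => φ⁻¹ n * n := by
  ext n
  simp only [LSeries.convolution_def, Nat.sum_divisorsAntidiagonal' fun x y => φ x * (φ⁻¹ y * y),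
    eisCoeff, mul_assoc]

lemma twist_eisCoeff_eq_convolution :
    ↗χ * eisCoeff f φ = (↗χ * ↗φ) ⍟ fun n => (↗χ * ↗φ⁻¹) n * n := by
  rw [eisCoeff_eq_convolution, ← DirichletCharacter.mul_convolution_distrib]
  congr 1
  ext n
  simp only [Pi.mul_apply, mul_assoc]

lemma LSeriesSummable_twist_mul (ψ : DirichletCharacter ℂ f) (hs : 1 < s.re) :
    LSeriesSummable (↗χ * ↗ψ) s :=
  χ.LSeriesSummable_mul (ψ.LSeriesSummable_of_one_lt_re hs)

lemma LSeriesSummable_twist_inv_mul_natCast (hs : 2 < s.re) :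
    LSeriesSummable (fun n => (↗χ * ↗φ⁻¹) n * n) s :=
  LSeriesSummable_mul_natCast_iff.mpr <|
    LSeriesSummable_twist_mul χ φ⁻¹ (by rw [sub_re, one_re]; linarith)

lemma LSeriesSummable_twist_eisCoeff (hs : 2 < s.re) :
    LSeriesSummable (↗χ * eisCoeff f φ) s := by
  rw [twist_eisCoeff_eq_convolution]
  exact (LSeriesSummable_twist_mul χ φ (by linarith)).convolution
    (LSeriesSummable_twist_inv_mul_natCast φ χ hs)

lemma LSeries_twist_eisCoeff (hs : 2 < s.re) :
    LSeries (↗χ * eisCoeff f φ) s = LSeries (↗χ * ↗φ) s * LSeries (↗χ * ↗φ⁻¹) (s - 1) := by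
  rw [twist_eisCoeff_eq_convolution, LSeries_convolution' (LSeriesSummable_twist_mul χ φ
    (by linarith)) (LSeriesSummable_twist_inv_mul_natCast φ χ hs), LSeries_mul_natCast]

variable (T₁ T₂ : ℕ)

noncomputable def refWeight (e : ℕ) : ℂ :=
  ((ArithmeticFunction.moebius e : ℤ) : ℂ) *
    (∏ l ∈ (Nat.gcd e T₁).primeFactors, φ ((l : ℕ) : ZMod f)) *
    (∏ q ∈ (Nat.gcd e T₂).primeFactors, (q : ℂ) * φ⁻¹ ((q : ℕ) : ZMod f))

lemma refCoeff_eq_sum_smul_dilate :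
    refCoeff f φ T₁ T₂ =
      ∑ e ∈ (T₁ * T₂).divisors, refWeight φ T₁ T₂ e • dilate e (eisCoeff f φ) := by
  ext n
  simp only [refCoeff, refWeight, dilate, Finset.sum_apply, Pi.smul_apply, smul_eq_mul]

lemma fullCoeff_eq_smul_dilate (D : ℕ) :
    fullCoeff f φ T₁ T₂ D = (D : ℂ) • dilate D (refCoeff f φ T₁ T₂) := by
  ext n
  simp only [fullCoeff, dilate, Pi.smul_apply, smul_eq_mul, mul_ite, mul_zero]

lemma LSeries_twist_refCoeff (hb : LSeriesSummable (↗χ * eisCoeff f φ) s) :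
    LSeries (↗χ * refCoeff f φ T₁ T₂) s =
      (∑ e ∈ (T₁ * T₂).divisors, refWeight φ T₁ T₂ e * χ e * (e : ℂ) ^ (-s)) *
        LSeries (↗χ * eisCoeff f φ) s := by
  rw [refCoeff_eq_sum_smul_dilate, mul_sum_smul_dilate,
    LSeries_sum_smul_dilate (fun h => (Nat.pos_of_mem_divisors h).false) _ hb]

lemma LSeries_twist_fullCoeff (D : ℕ) :
    LSeries (↗χ * fullCoeff f φ T₁ T₂ D) s =
      χ D * (D * (D : ℂ) ^ (-s)) * LSeries (↗χ * refCoeff f φ T₁ T₂) s := by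
  rw [fullCoeff_eq_smul_dilate, mul_smul_comm, mul_dilate, smul_comm, LSeries_smul,
    LSeries_natCast_smul_dilate]
  simp only [mul_assoc]

lemma sum_refWeight_twist_cpow {T₁ T₂ : ℕ} (h₁ : Squarefree T₁) (h₂ : Squarefree T₂)
    (hT : T₁.Coprime T₂) (s : ℂ) :
    ∑ e ∈ (T₁ * T₂).divisors, refWeight φ T₁ T₂ e * χ e * (e : ℂ) ^ (-s) =
      (∏ l ∈ T₁.primeFactors, (1 - χ l * φ l * (l : ℂ) ^ (-s))) *
        ∏ q ∈ T₂.primeFactors, (1 - χ q * φ⁻¹ q * (q : ℂ) ^ (1 - s)) := by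
  have hterm : ∀ e ∈ (T₁ * T₂).divisors, refWeight φ T₁ T₂ e * χ e * (e : ℂ) ^ (-s) =
      (ArithmeticFunction.moebius e : ℂ) *
        (∏ l ∈ (e.gcd T₁).primeFactors, φ l * (χ l * (l : ℂ) ^ (-s))) *
        ∏ q ∈ (e.gcd T₂).primeFactors, q * φ⁻¹ q * (χ q * (q : ℂ) ^ (-s)) := by
    intro e he
    have hdvd := Nat.dvd_of_mem_divisors he
    have hsq : Squarefree e := ((Nat.squarefree_mul hT).mpr ⟨h₁, h₂⟩).squarefree_of_dvd hdvd
    rw [refWeight, mul_assoc, ← prod_primeFactors_twist_cpow χ hsq,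
      prod_primeFactors_eq_prod_primeFactors_gcd_mul hT hdvd]
    simp only [Finset.prod_mul_distrib]
    ring
  rw [Finset.sum_congr rfl hterm, sum_divisors_mul_moebius_mul_prod_primeFactors_gcd h₁ h₂ hT]
  congr 1 <;> refine Finset.prod_congr rfl fun p hp => ?_
  · ring
  · have hp0 : (p : ℂ) ≠ 0 := Nat.cast_ne_zero.mpr (Nat.prime_of_mem_primeFactors hp).ne_zero
    rw [cpow_sub _ _ hp0, cpow_one, cpow_neg, div_eq_mul_inv]
    ring

lemma LSeries_twist_fullCoeff_factorization {T₁ T₂ : ℕ} (h₁ : Squarefree T₁)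
    (h₂ : Squarefree T₂) (hT : T₁.Coprime T₂) (D : ℕ) (hs : 2 < s.re) :
    LSeries (↗χ * fullCoeff f φ T₁ T₂ D) s =
      χ D * (D : ℂ) ^ (1 - s) *
        (∏ l ∈ T₁.primeFactors, (1 - χ l * φ l * (l : ℂ) ^ (-s))) *
        (∏ q ∈ T₂.primeFactors, (1 - χ q * φ⁻¹ q * (q : ℂ) ^ (1 - s))) *
        LSeries (↗χ * ↗φ) s * LSeries (↗χ * ↗φ⁻¹) (s - 1) := by
  have hs1 : s ≠ 1 := fun h => by norm_num [h] at hs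
  rw [LSeries_twist_fullCoeff,
    LSeries_twist_refCoeff _ _ _ _ (LSeriesSummable_twist_eisCoeff φ χ hs),
    sum_refWeight_twist_cpow φ χ h₁ h₂ hT, LSeries_twist_eisCoeff φ χ hs,
    mul_cpow_neg_eq_cpow_one_sub _ hs1]
  ring

end EisensteinLSeries

theorem fullCoeff_twisted_LSeries_factorization_general
    (f : ℕ) (φ : DirichletCharacter ℂ f)
    (M L : ℕ) (hcop : Nat.Coprime (f * M) L)
    (T₁ T₂ D : ℕ)
    (hT₁ : T₁ = ∏ l ∈ M.primeFactors.filter (fun l => ¬ l ∣ f), l)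
    (hT₂ : T₂ = ∏ q ∈ L.primeFactors, q)
    (m : ℕ) (χ : DirichletCharacter ℂ m)
    (s : ℂ) (hs : 2 < s.re) :
    (∑' n : ℕ, χ ((n + 1 : ℕ) : ZMod m) * fullCoeff f φ T₁ T₂ D (n + 1) *
        ((n + 1 : ℕ) : ℂ) ^ (-s)) =
      χ ((D : ℕ) : ZMod m) * (D : ℂ) ^ (1 - s) *
        (∏ l ∈ T₁.primeFactors,
          (1 - χ ((l : ℕ) : ZMod m) * φ ((l : ℕ) : ZMod f) * (l : ℂ) ^ (-s))) *
        (∏ q ∈ T₂.primeFactors,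
          (1 - χ ((q : ℕ) : ZMod m) * φ⁻¹ ((q : ℕ) : ZMod f) * (q : ℂ) ^ (1 - s))) *
        (∑' n : ℕ, χ ((n + 1 : ℕ) : ZMod m) * φ ((n + 1 : ℕ) : ZMod f) *
          ((n + 1 : ℕ) : ℂ) ^ (-s)) *
        (∑' n : ℕ, χ ((n + 1 : ℕ) : ZMod m) * φ⁻¹ ((n + 1 : ℕ) : ZMod f) *
          ((n + 1 : ℕ) : ℂ) ^ (1 - s)) := by
  have h₁ : Squarefree T₁ := hT₁ ▸ squarefree_prod_of_prime fun p hp =>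
    Nat.prime_of_mem_primeFactors (Finset.mem_filter.mp hp).1
  have h₂ : Squarefree T₂ := hT₂ ▸ squarefree_prod_of_prime fun _ => Nat.prime_of_mem_primeFactors
  have hT : T₁.Coprime T₂ := by
    have hT₁M : T₁ ∣ M := hT₁ ▸ (Finset.prod_dvd_prod_of_subset _ _ _
      (Finset.filter_subset _ _)).trans (Nat.prod_primeFactors_dvd M)
    exact (hcop.coprime_mul_left.coprime_dvd_left hT₁M).coprime_dvd_right
      (hT₂ ▸ Nat.prod_primeFactors_dvd L)
  simpa only [LSeries_eq_tsum_succ, Pi.mul_apply, neg_sub] using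
    LSeries_twist_fullCoeff_factorization φ χ h₁ h₂ hT D hs

/-- The twisted `L`-series of `E_{φ,M,L}` factors as
`L(E_{φ,M,L}, χ, s) = χ(D)·D^{1−s}·∏_{l∣T₁}(1 − χφ(l)l^{−s})·∏_{q∣T₂}(1 − χφ⁻¹(q)q^{1−s})
·L(χφ, s)·L(χφ⁻¹, s−1)` for `Re(s) > 2`. -/
theorem fullCoeff_twisted_LSeries_factorization
    (f : ℕ) (hf : 1 < f) (φ : DirichletCharacter ℂ f)
    (hφ : φ ≠ 1) (hφprim : φ.IsPrimitive)
    (N M L : ℕ) (hN : 0 < N) (hM : 0 < M) (hL : 0 < L)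
    (hdvd : f ^ 2 * M * L ∣ N) (hcop : Nat.Coprime (f * M) L)
    (T₁ T₂ D : ℕ)
    (hT₁ : T₁ = ∏ l ∈ M.primeFactors.filter (fun l => ¬ l ∣ f), l)
    (hT₂ : T₂ = ∏ q ∈ L.primeFactors, q)
    (hD : D = M * L / (T₁ * T₂))
    (m : ℕ) (χ : DirichletCharacter ℂ m) (hm : Nat.Coprime m N)
    (s : ℂ) (hs : 2 < s.re) :
    (∑' n : ℕ, χ ((n + 1 : ℕ) : ZMod m) * fullCoeff f φ T₁ T₂ D (n + 1) *
        ((n + 1 : ℕ) : ℂ) ^ (-s)) =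
      χ ((D : ℕ) : ZMod m) * (D : ℂ) ^ (1 - s) *
        (∏ l ∈ T₁.primeFactors,
          (1 - χ ((l : ℕ) : ZMod m) * φ ((l : ℕ) : ZMod f) * (l : ℂ) ^ (-s))) *
        (∏ q ∈ T₂.primeFactors,
          (1 - χ ((q : ℕ) : ZMod m) * φ⁻¹ ((q : ℕ) : ZMod f) * (q : ℂ) ^ (1 - s))) *
        (∑' n : ℕ, χ ((n + 1 : ℕ) : ZMod m) * φ ((n + 1 : ℕ) : ZMod f) *
          ((n + 1 : ℕ) : ℂ) ^ (-s)) *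
        (∑' n : ℕ, χ ((n + 1 : ℕ) : ZMod m) * φ⁻¹ ((n + 1 : ℕ) : ZMod f) *
          ((n + 1 : ℕ) : ℂ) ^ (1 - s)) :=
  fullCoeff_twisted_LSeries_factorization_general f φ M L hcop T₁ T₂ D hT₁ hT₂ m χ s hs
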